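/- Let n ≥ 3 and let V be a nonempty one-dimensional algebraic subset of 𝔻^n with the H^∞-extension property, i.e. every bounded holomorphic function f : V → ℂ extends to a bounded holomorphic function F : 𝔻^n → ℂ with F = f on V and sup_{𝔻^n} |F| = sup_V |f|. Then V is connected. -/

import Mathlib

open Metric MvPolynomial

noncomputable section

/-- The open unit polydisc in ℂⁿ. -/
def polydisc (n : ℕ) : Set (Fin n → ℂ) := {z | ∀ i, ‖z i‖ < 1}

/-- The ideal of polynomials vanishing on a set `W ⊆ ℂⁿ`. -/
def vanishingIdeal' {n : ℕ} (W : Set (Fin n → ℂ)) : Ideal (MvPolynomial (Fin n) ℂ) where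
  carrier := {p | ∀ z ∈ W, MvPolynomial.eval z p = 0}
  add_mem' := by
    intro a b ha hb z hz
    simp [ha z hz, hb z hz]
  zero_mem' := by intro z hz; simp
  smul_mem' := by
    intro c p hp z hz
    simp [smul_eq_mul, hp z hz]

/-- `V` is an algebraic subset of the polydisc `𝔻ⁿ`. -/
def IsAlgebraicIn {n : ℕ} (V : Set (Fin n → ℂ)) : Prop :=
  ∃ s : Finset (MvPolynomial (Fin n) ℂ),
    V = polydisc n ∩ {z | ∀ p ∈ s, MvPolynomial.eval z p = 0}

/-- `V` is a one-dimensional algebraic subset of the polydisc `𝔻ⁿ`. -/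
def IsOneDimAlgebraicIn {n : ℕ} (V : Set (Fin n → ℂ)) : Prop :=
  ∃ s : Finset (MvPolynomial (Fin n) ℂ),
    V = polydisc n ∩ {z | ∀ p ∈ s, MvPolynomial.eval z p = 0} ∧
    ringKrullDim (MvPolynomial (Fin n) ℂ ⧸
      vanishingIdeal' {z : Fin n → ℂ | ∀ p ∈ s, MvPolynomial.eval z p = 0}) = 1

/-- `V ⊆ U` has the polynomial extension property with respect to `U`. -/
def HasPolyExtProp {n : ℕ} (U V : Set (Fin n → ℂ)) : Prop :=
  ∀ p : MvPolynomial (Fin n) ℂ,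
    ∃ F : (Fin n → ℂ) → ℂ,
      DifferentiableOn ℂ F U ∧
      (∃ C : ℝ, ∀ z ∈ U, ‖F z‖ ≤ C) ∧
      (∀ z ∈ V, F z = MvPolynomial.eval z p) ∧
      sSup ((fun z => ‖F z‖) '' U) =
        sSup ((fun z => ‖MvPolynomial.eval z p‖) '' V)

/-- `V` is a holomorphic retract of the polydisc `𝔻ⁿ`. -/
def IsHolRetract {n : ℕ} (V : Set (Fin n → ℂ)) : Prop :=
  ∃ r : (Fin n → ℂ) → (Fin n → ℂ),
    DifferentiableOn ℂ r (polydisc n) ∧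
    (∀ z ∈ polydisc n, r z ∈ V) ∧
    (∀ z ∈ V, r z = z)

/-- The Möbius (pseudohyperbolic) distance on the unit disc. -/
def mDist (z w : ℂ) : ℝ := ‖(z - w) / (1 - z * (starRingEnd ℂ) w)‖

/-- A compact-type set `K ⊆ ℂⁿ` is polynomially convex. -/
def PolyConvex {n : ℕ} (K : Set (Fin n → ℂ)) : Prop :=
  K = {z | ∀ p : MvPolynomial (Fin n) ℂ,
        ‖MvPolynomial.eval z p‖ ≤
          sSup ((fun w => ‖MvPolynomial.eval w p‖) '' K)}

/-- `h` is a Möbius automorphism of the unit disc. -/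
def IsDiscAut (h : ℂ → ℂ) : Prop :=
  ∃ ω a : ℂ, ‖ω‖ = 1 ∧ ‖a‖ < 1 ∧
    ∀ z : ℂ, h z = ω * ((z - a) / (1 - (starRingEnd ℂ) a * z))

/-- `w` is a regular point of `V`. -/
def IsRegularPoint {n : ℕ} (V : Set (Fin n → ℂ)) (w : Fin n → ℂ) : Prop :=
  ∃ (Ω : Set (Fin n → ℂ)) (δ : ℝ) (φ : ℂ → Fin n → ℂ),
    IsOpen Ω ∧ w ∈ Ω ∧ 0 < δ ∧
    DifferentiableOn ℂ φ (ball 0 δ) ∧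
    Set.InjOn φ (ball 0 δ) ∧
    (∀ l ∈ ball (0:ℂ) δ, deriv φ l ≠ 0) ∧
    φ 0 = w ∧
    V ∩ Ω = (φ '' ball 0 δ) ∩ Ω

/-- The open Euclidean ball of radius `t` centered at the origin of `ℂⁿ`. -/
def euclBall (n : ℕ) (t : ℝ) : Set (Fin n → ℂ) :=
  {z | ∑ i, ‖z i‖ ^ 2 < t ^ 2}

/-- A function `f` on `V ⊆ ℂⁿ` is holomorphic on `V` if near each point of `V` it extends to
a holomorphic function of a neighborhood. -/
def HolomorphicOnSet {n : ℕ} (V : Set (Fin n → ℂ)) (f : (Fin n → ℂ) → ℂ) : Prop :=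
  ∀ ζ ∈ V, ∃ U : Set (Fin n → ℂ), IsOpen U ∧ ζ ∈ U ∧
    ∃ G : (Fin n → ℂ) → ℂ, DifferentiableOn ℂ G U ∧ ∀ z ∈ U ∩ V, G z = f z

/-! If `V` splits into two relatively clopen pieces, the function equal to `0` on one piece and
`1` on the other is bounded and holomorphic on `V`. A norm-preserving extension to `𝔻ⁿ` then has
modulus at most `1` and attains the value `1` inside the polydisc, so by the maximum principle
it is constant, although it also takes the value `0`. -/

lemma polydisc_eq_pi (n : ℕ) : polydisc n = Set.univ.pi fun _ => ball (0 : ℂ) 1 := by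
  ext z
  simp [polydisc]

lemma isOpen_polydisc (n : ℕ) : IsOpen (polydisc n) := by
  rw [polydisc_eq_pi]
  exact isOpen_set_pi Set.finite_univ fun _ _ => isOpen_ball

lemma convex_polydisc (n : ℕ) : Convex ℝ (polydisc n) := by
  rw [polydisc_eq_pi]
  exact convex_pi fun _ _ => convex_ball 0 1

lemma subset_polydisc_of_isOneDimAlgebraicIn {n : ℕ} {V : Set (Fin n → ℂ)}
    (hV : IsOneDimAlgebraicIn V) : V ⊆ polydisc n := by
  obtain ⟨s, rfl, -⟩ := hV
  exact Set.inter_subset_left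

lemma holomorphicOnSet_indicator_one {n : ℕ} {V u v : Set (Fin n → ℂ)} (hu : IsOpen u)
    (hv : IsOpen v) (hVuv : V ⊆ u ∪ v) (huv : V ∩ (u ∩ v) = ∅) :
    HolomorphicOnSet V (v.indicator 1) := by
  intro ζ hζ
  by_cases hζv : ζ ∈ v
  · refine ⟨v, hv, hζv, 1, differentiableOn_const 1, fun z ⟨hzv, _⟩ => ?_⟩
    simp [hzv]
  · have hζu : ζ ∈ u := (hVuv hζ).resolve_right hζv
    refine ⟨u, hu, hζu, 0, differentiableOn_const 0, fun z ⟨hzu, hzV⟩ => ?_⟩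
    have hzv : z ∉ v := fun hzv => (Set.eq_empty_iff_forall_notMem.mp huv) z ⟨hzV, hzu, hzv⟩
    simp [hzv]

lemma norm_le_of_sSup_norm_image_eq {α E : Type*} [SeminormedAddGroup E] {U V : Set α}
    {F f : α → E} {c : ℝ} (hF : BddAbove ((‖F ·‖) '' U))
    (hsup : sSup ((‖F ·‖) '' U) = sSup ((‖f ·‖) '' V)) (hV : V.Nonempty)
    (hf : ∀ z ∈ V, ‖f z‖ ≤ c) {z : α} (hz : z ∈ U) : ‖F z‖ ≤ c :=
  calc ‖F z‖ ≤ sSup ((‖F ·‖) '' U) := le_csSup hF ⟨z, hz, rfl⟩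
    _ = sSup ((‖f ·‖) '' V) := hsup
    _ ≤ c := csSup_le (hV.image _) (Set.forall_mem_image.mpr hf)

theorem stmt_14_general (n : ℕ) (V : Set (Fin n → ℂ)) (hne : V.Nonempty)
    (halg : IsOneDimAlgebraicIn V)
    (hext : ∀ f : (Fin n → ℂ) → ℂ, HolomorphicOnSet V f →
      (∃ C : ℝ, ∀ z ∈ V, ‖f z‖ ≤ C) →
      ∃ F : (Fin n → ℂ) → ℂ, DifferentiableOn ℂ F (polydisc n) ∧
        (∃ C : ℝ, ∀ z ∈ polydisc n, ‖F z‖ ≤ C) ∧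
        (∀ z ∈ V, F z = f z) ∧
        sSup ((fun z => ‖F z‖) '' polydisc n) =
          sSup ((fun z => ‖f z‖) '' V)) :
    IsConnected V := by
  refine ⟨hne, fun u v hu hv hVuv ⟨a, haV, hau⟩ ⟨b, hbV, hbv⟩ => ?_⟩
  by_contra huv
  rw [Set.not_nonempty_iff_eq_empty] at huv
  have hav : a ∉ v := fun hav => (Set.eq_empty_iff_forall_notMem.mp huv) a ⟨haV, hau, hav⟩
  have hbound : ∀ z ∈ V, ‖v.indicator (1 : (Fin n → ℂ) → ℂ) z‖ ≤ 1 := by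
    intro z _
    by_cases hz : z ∈ v <;> simp [hz]
  obtain ⟨F, hFhol, ⟨C, hC⟩, hFV, hsup⟩ :=
    hext _ (holomorphicOnSet_indicator_one hu hv hVuv huv) ⟨1, hbound⟩
  have hFle : ∀ z ∈ polydisc n, ‖F z‖ ≤ 1 := fun z hz =>
    norm_le_of_sSup_norm_image_eq ⟨C, Set.forall_mem_image.mpr hC⟩ hsup hne hbound hz
  have hFb : F b = 1 := by simp [hFV b hbV, hbv]
  have hFa : F a = 0 := by simp [hFV a haV, hav]
  have hVP := subset_polydisc_of_isOneDimAlgebraicIn halg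
  have hmax : IsMaxOn (‖F ·‖) (polydisc n) b := fun z hz => by
    simpa [hFb] using hFle z hz
  have hconst := Complex.eqOn_of_isPreconnected_of_isMaxOn_norm
    (convex_polydisc n).isPreconnected (isOpen_polydisc n) hFhol (hVP hbV) hmax (hVP haV)
  rw [hFa, hFb] at hconst
  exact zero_ne_one hconst

/-- A nonempty one-dimensional algebraic subset of `𝔻ⁿ` (`n ≥ 3`) with the
`H^∞`-extension property is connected. -/
theorem stmt_14 (n : ℕ) (hn : 3 ≤ n) (V : Set (Fin n → ℂ)) (hne : V.Nonempty)
    (halg : IsOneDimAlgebraicIn V)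
    (hext : ∀ f : (Fin n → ℂ) → ℂ, HolomorphicOnSet V f →
      (∃ C : ℝ, ∀ z ∈ V, ‖f z‖ ≤ C) →
      ∃ F : (Fin n → ℂ) → ℂ, DifferentiableOn ℂ F (polydisc n) ∧
        (∃ C : ℝ, ∀ z ∈ polydisc n, ‖F z‖ ≤ C) ∧
        (∀ z ∈ V, F z = f z) ∧
        sSup ((fun z => ‖F z‖) '' polydisc n) =
          sSup ((fun z => ‖f z‖) '' V)) :
    IsConnected V :=
  stmt_14_general n V hne halg hext
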